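/- arXiv:1401.2244 — 2 statements merged into one kernel-verified Lean document; each statement's English description precedes it below -/
import Mathlib

section
/- Let λ₀ : ℝ² → ℝ be a trigonometric polynomial of the form λ₀(x,y) = Σ_{n=1}^{N} α_n (cos(nx) + cos(ny)) + Σ_{n=1}^{N} β_n (cos(n(x−y)) + cos(n(x+y))) with real coefficients α_n, β_n. Then there exists a sequence (λ_k)_{k ≥ 0} of smooth functions ℝ² → ℝ, each 2π-periodic in x and in y and each invariant under the three maps (x,y) ↦ (−x,y), (x,y) ↦ (x,−y), and (x,y) ↦ (y,x), with λ_0 = λ₀, such that for every k ≥ 1: (λ_k)_xyyy − (λ_k)_xxxy = Σ_{s=0}^{k−1} ⟨λ_s, λ_{k−s−1}⟩ identically on ℝ². Thus the recursion defining the formal power-series solution λ = Σ_k λ_k ε^k of the equation λ_xxxy − λ_xyyy = ε⟨λ,λ⟩ is well defined with doubly periodic terms. -/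
open Real Finset

/-- Partial derivative with respect to the first variable. -/
noncomputable def pdx (f : ℝ × ℝ → ℝ) : ℝ × ℝ → ℝ :=
  fun p => deriv (fun s => f (s, p.2)) p.1

/-- Partial derivative with respect to the second variable. -/
noncomputable def pdy (f : ℝ × ℝ → ℝ) : ℝ × ℝ → ℝ :=
  fun p => deriv (fun s => f (p.1, s)) p.2

/-- The bilinear expression `⟨f, g⟩` from the recursion of Theorem 7. -/
noncomputable def bra (f g : ℝ × ℝ → ℝ) : ℝ × ℝ → ℝ :=
  fun z => pdy (pdx f) z * (pdy (pdy (pdy (pdy g))) z - pdx (pdx (pdx (pdx g))) z)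
    + 3 * (pdy (pdy (pdy f)) z * pdy (pdy (pdx g)) z
      - pdx (pdx (pdx f)) z * pdy (pdx (pdx g)) z)
    + 2 * (pdy (pdy f) z * pdy (pdy (pdy (pdx g))) z
      - pdx (pdx f) z * pdy (pdx (pdx (pdx g))) z)


noncomputable section Aux

/-- `fc a x = cos (a x)` -/
def fc (a : ℝ) : ℝ → ℝ := fun x => Real.cos (a * x)
/-- `fs a x = sin (a x)` -/
def fs (a : ℝ) : ℝ → ℝ := fun x => Real.sin (a * x)

lemma hasDerivAt_fc (a x : ℝ) : HasDerivAt (fc a) (-a * fs a x) x := by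
  have h := (Real.hasDerivAt_cos (a * x)).comp x ((hasDerivAt_id x).const_mul a)
  unfold fc fs
  simpa [fc, fs, Function.comp_def] using h.congr_deriv (by ring)

lemma hasDerivAt_fs (a x : ℝ) : HasDerivAt (fs a) (a * fc a x) x := by
  have h := (Real.hasDerivAt_sin (a * x)).comp x ((hasDerivAt_id x).const_mul a)
  unfold fc fs
  simpa [fc, fs, Function.comp_def] using h.congr_deriv (by ring)

lemma diff_fc (a : ℝ) : Differentiable ℝ (fc a) := fun x => (hasDerivAt_fc a x).differentiableAt
lemma diff_fs (a : ℝ) : Differentiable ℝ (fs a) := fun x => (hasDerivAt_fs a x).differentiableAt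
lemma deriv_fc (a x : ℝ) : deriv (fc a) x = -a * fs a x := (hasDerivAt_fc a x).deriv
lemma deriv_fs (a x : ℝ) : deriv (fs a) x = a * fc a x := (hasDerivAt_fs a x).deriv

/-- separated product -/
def sep (c : ℝ) (u v : ℝ → ℝ) : ℝ × ℝ → ℝ := fun z => c * (u z.1 * v z.2)

lemma pdx_sep_fc (c a : ℝ) (v : ℝ → ℝ) : pdx (sep c (fc a) v) = sep (c * -a) (fs a) v := by
  funext z
  show deriv (fun s => c * (fc a s * v z.2)) z.1 = _
  have h : (fun s => c * (fc a s * v z.2)) = fun s => (c * v z.2) * fc a s := by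
    funext s; ring
  rw [h, deriv_const_mul _ ((diff_fc a).differentiableAt), deriv_fc]
  show _ = c * -a * (fs a z.1 * v z.2)
  ring

lemma pdx_sep_fs (c a : ℝ) (v : ℝ → ℝ) : pdx (sep c (fs a) v) = sep (c * a) (fc a) v := by
  funext z
  show deriv (fun s => c * (fs a s * v z.2)) z.1 = _
  have h : (fun s => c * (fs a s * v z.2)) = fun s => (c * v z.2) * fs a s := by
    funext s; ring
  rw [h, deriv_const_mul _ ((diff_fs a).differentiableAt), deriv_fs]
  show _ = c * a * (fc a z.1 * v z.2)
  ring

lemma pdy_sep_fc (c b : ℝ) (u : ℝ → ℝ) : pdy (sep c u (fc b)) = sep (c * -b) u (fs b) := by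
  funext z
  show deriv (fun s => c * (u z.1 * fc b s)) z.2 = _
  have h : (fun s => c * (u z.1 * fc b s)) = fun s => (c * u z.1) * fc b s := by
    funext s; ring
  rw [h, deriv_const_mul _ ((diff_fc b).differentiableAt), deriv_fc]
  show _ = c * -b * (u z.1 * fs b z.2)
  ring

lemma pdy_sep_fs (c b : ℝ) (u : ℝ → ℝ) : pdy (sep c u (fs b)) = sep (c * b) u (fc b) := by
  funext z
  show deriv (fun s => c * (u z.1 * fs b s)) z.2 = _
  have h : (fun s => c * (u z.1 * fs b s)) = fun s => (c * u z.1) * fs b s := by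
    funext s; ring
  rw [h, deriv_const_mul _ ((diff_fs b).differentiableAt), deriv_fs]
  show _ = c * b * (u z.1 * fc b z.2)
  ring

/-- `cc a b z = cos(a z₁) cos(b z₂)` -/
def cc (a b : ℤ) : ℝ × ℝ → ℝ := sep 1 (fc a) (fc b)
/-- `ss a b z = sin(a z₁) sin(b z₂)` -/
def ss (a b : ℤ) : ℝ × ℝ → ℝ := sep 1 (fs a) (fs b)

/-- smoothness transfer -/
lemma pdx_eq_fderiv {f : ℝ × ℝ → ℝ} (hf : ContDiff ℝ (⊤ : ℕ∞) f) :
    pdx f = fun p => fderiv ℝ f p (1, 0) := by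
  funext p
  have h2 : HasDerivAt (fun s : ℝ => (s, p.2)) ((1:ℝ), (0:ℝ)) p.1 :=
    (hasDerivAt_id p.1).prodMk (hasDerivAt_const _ _)
  have h1 := ((hf.differentiable (by simp)) (p.1, p.2)).hasFDerivAt.comp_hasDerivAt p.1 h2
  simpa [pdx, Function.comp_def] using h1.deriv

lemma pdy_eq_fderiv {f : ℝ × ℝ → ℝ} (hf : ContDiff ℝ (⊤ : ℕ∞) f) :
    pdy f = fun p => fderiv ℝ f p (0, 1) := by
  funext p
  have h2 : HasDerivAt (fun s : ℝ => (p.1, s)) ((0:ℝ), (1:ℝ)) p.2 :=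
    (hasDerivAt_const _ _).prodMk (hasDerivAt_id p.2)
  have h1 := ((hf.differentiable (by simp)) (p.1, p.2)).hasFDerivAt.comp_hasDerivAt p.2 h2
  simpa [pdy, Function.comp_def] using h1.deriv

lemma pdx_smooth {f : ℝ × ℝ → ℝ} (hf : ContDiff ℝ (⊤ : ℕ∞) f) : ContDiff ℝ (⊤ : ℕ∞) (pdx f) := by
  rw [pdx_eq_fderiv hf]; exact (hf.fderiv_right (by simp)).clm_apply contDiff_const

lemma pdy_smooth {f : ℝ × ℝ → ℝ} (hf : ContDiff ℝ (⊤ : ℕ∞) f) : ContDiff ℝ (⊤ : ℕ∞) (pdy f) := by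
  rw [pdy_eq_fderiv hf]; exact (hf.fderiv_right (by simp)).clm_apply contDiff_const

lemma diff_slice_x {f : ℝ × ℝ → ℝ} (hf : ContDiff ℝ (⊤ : ℕ∞) f) (y : ℝ) :
    Differentiable ℝ (fun s => f (s, y)) :=
  (hf.differentiable (by simp)).comp (differentiable_id.prodMk (differentiable_const _))

lemma diff_slice_y {f : ℝ × ℝ → ℝ} (hf : ContDiff ℝ (⊤ : ℕ∞) f) (x : ℝ) :
    Differentiable ℝ (fun s => f (x, s)) :=
  (hf.differentiable (by simp)).comp ((differentiable_const _).prodMk differentiable_id)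

lemma pdx_add {f g : ℝ × ℝ → ℝ} (hf : ContDiff ℝ (⊤ : ℕ∞) f) (hg : ContDiff ℝ (⊤ : ℕ∞) g) :
    pdx (f + g) = pdx f + pdx g := by
  funext z
  show deriv (fun s => (f + g) (s, z.2)) z.1 = _
  have h : (fun s => (f + g) (s, z.2)) = fun s => f (s, z.2) + g (s, z.2) := rfl
  rw [h, deriv_fun_add ((diff_slice_x hf z.2).differentiableAt) ((diff_slice_x hg z.2).differentiableAt)]
  rfl

lemma pdy_add {f g : ℝ × ℝ → ℝ} (hf : ContDiff ℝ (⊤ : ℕ∞) f) (hg : ContDiff ℝ (⊤ : ℕ∞) g) :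
    pdy (f + g) = pdy f + pdy g := by
  funext z
  show deriv (fun s => (f + g) (z.1, s)) z.2 = _
  have h : (fun s => (f + g) (z.1, s)) = fun s => f (z.1, s) + g (z.1, s) := rfl
  rw [h, deriv_fun_add ((diff_slice_y hf z.1).differentiableAt) ((diff_slice_y hg z.1).differentiableAt)]
  rfl

lemma pdx_smul {f : ℝ × ℝ → ℝ} (c : ℝ) (hf : ContDiff ℝ (⊤ : ℕ∞) f) :
    pdx (c • f) = c • pdx f := by
  funext z
  show deriv (fun s => (c • f) (s, z.2)) z.1 = _
  have h : (fun s => (c • f) (s, z.2)) = fun s => c * f (s, z.2) := rfl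
  rw [h, deriv_const_mul _ ((diff_slice_x hf z.2).differentiableAt)]
  rfl

lemma pdy_smul {f : ℝ × ℝ → ℝ} (c : ℝ) (hf : ContDiff ℝ (⊤ : ℕ∞) f) :
    pdy (c • f) = c • pdy f := by
  funext z
  show deriv (fun s => (c • f) (z.1, s)) z.2 = _
  have h : (fun s => (c • f) (z.1, s)) = fun s => c * f (z.1, s) := rfl
  rw [h, deriv_const_mul _ ((diff_slice_y hf z.1).differentiableAt)]
  rfl

lemma pdx_zero : pdx (0 : ℝ × ℝ → ℝ) = 0 := by
  funext z
  show deriv (fun _ => (0:ℝ)) z.1 = 0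
  simp

lemma pdy_zero : pdy (0 : ℝ × ℝ → ℝ) = 0 := by
  funext z
  show deriv (fun _ => (0:ℝ)) z.2 = 0
  simp

end Aux
-- part 2 (appended to p1 content when testing)
noncomputable section Spans

def Egen : Set (ℝ × ℝ → ℝ) := {f | ∃ a b : ℤ, f = cc a b}
def Ogen : Set (ℝ × ℝ → ℝ) := {f | ∃ a b : ℤ, f = ss a b}
def Agen : Set (ℝ × ℝ → ℝ) := {f | ∃ a b : ℤ, f = ss a b - ss b a}

def Esp : Submodule ℝ (ℝ × ℝ → ℝ) := Submodule.span ℝ Egen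
def Osp : Submodule ℝ (ℝ × ℝ → ℝ) := Submodule.span ℝ Ogen
def Asp : Submodule ℝ (ℝ × ℝ → ℝ) := Submodule.span ℝ Agen

lemma cc_smooth (a b : ℤ) : ContDiff ℝ (⊤ : ℕ∞) (cc a b) := by
  have : cc a b = fun z : ℝ × ℝ => (1:ℝ) * (Real.cos ((a:ℝ) * z.1) * Real.cos ((b:ℝ) * z.2)) := rfl
  rw [this]
  exact contDiff_const.mul ((Real.contDiff_cos.comp (contDiff_const.mul contDiff_fst)).mul
    (Real.contDiff_cos.comp (contDiff_const.mul contDiff_snd)))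

lemma Esp_smooth {f : ℝ × ℝ → ℝ} (hf : f ∈ Esp) : ContDiff ℝ (⊤ : ℕ∞) f := by
  induction hf using Submodule.span_induction with
  | mem x h => obtain ⟨a, b, rfl⟩ := h; exact cc_smooth a b
  | zero => exact contDiff_const
  | add x y hx hy ihx ihy => exact ihx.add ihy
  | smul c x hx ih => exact ih.const_smul c

lemma Esp_periodic {f : ℝ × ℝ → ℝ} (hf : f ∈ Esp) (z : ℝ × ℝ) :
    f (z.1 + 2 * Real.pi, z.2) = f z ∧ f (z.1, z.2 + 2 * Real.pi) = f z := by
  induction hf using Submodule.span_induction with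
  | mem x h =>
    obtain ⟨a, b, rfl⟩ := h
    constructor
    · show (1:ℝ) * (Real.cos ((a:ℝ) * (z.1 + 2*Real.pi)) * Real.cos ((b:ℝ) * z.2)) = _
      rw [show (a:ℝ) * (z.1 + 2*Real.pi) = (a:ℝ)*z.1 + (a:ℤ) * (2*Real.pi) from by push_cast; ring,
        Real.cos_add_int_mul_two_pi]
      rfl
    · show (1:ℝ) * (Real.cos ((a:ℝ) * z.1) * Real.cos ((b:ℝ) * (z.2 + 2*Real.pi))) = _
      rw [show (b:ℝ) * (z.2 + 2*Real.pi) = (b:ℝ)*z.2 + (b:ℤ) * (2*Real.pi) from by push_cast; ring,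
        Real.cos_add_int_mul_two_pi]
      rfl
  | zero => exact ⟨rfl, rfl⟩
  | add x y hx hy ihx ihy =>
    exact ⟨by simp only [Pi.add_apply, ihx.1, ihy.1], by simp only [Pi.add_apply, ihx.2, ihy.2]⟩
  | smul c x hx ih =>
    exact ⟨by simp only [Pi.smul_apply, ih.1], by simp only [Pi.smul_apply, ih.2]⟩

lemma Esp_even {f : ℝ × ℝ → ℝ} (hf : f ∈ Esp) (z : ℝ × ℝ) :
    f (-z.1, z.2) = f z ∧ f (z.1, -z.2) = f z := by
  induction hf using Submodule.span_induction with
  | mem x h =>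
    obtain ⟨a, b, rfl⟩ := h
    constructor
    · show (1:ℝ) * (Real.cos ((a:ℝ) * -z.1) * Real.cos ((b:ℝ) * z.2)) = _
      rw [show (a:ℝ) * -z.1 = -((a:ℝ)*z.1) from by ring, Real.cos_neg]; rfl
    · show (1:ℝ) * (Real.cos ((a:ℝ) * z.1) * Real.cos ((b:ℝ) * -z.2)) = _
      rw [show (b:ℝ) * -z.2 = -((b:ℝ)*z.2) from by ring, Real.cos_neg]; rfl
  | zero => exact ⟨rfl, rfl⟩
  | add x y hx hy ihx ihy =>
    exact ⟨by simp only [Pi.add_apply, ihx.1, ihy.1], by simp only [Pi.add_apply, ihx.2, ihy.2]⟩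
  | smul c x hx ih =>
    exact ⟨by simp only [Pi.smul_apply, ih.1], by simp only [Pi.smul_apply, ih.2]⟩

/-- the operator on the left side of the recursion -/
def Lop (f : ℝ × ℝ → ℝ) : ℝ × ℝ → ℝ :=
  fun z => pdy (pdy (pdy (pdx f))) z - pdy (pdx (pdx (pdx f))) z

lemma Lop_cc (a b : ℤ) :
    Lop (cc a b) = ((a:ℝ) * b * ((a:ℝ)^2 - (b:ℝ)^2)) • ss a b := by
  funext z
  simp only [Lop, cc, ss, pdx_sep_fc, pdx_sep_fs, pdy_sep_fc, pdy_sep_fs,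
    Pi.smul_apply, smul_eq_mul, sep]
  ring

/-- product function appearing in the expansion of `bra` on generators -/
def scsc (a b c d : ℤ) : ℝ × ℝ → ℝ := fun z =>
  (Real.sin ((a:ℝ) * z.1) * Real.cos ((b:ℝ) * z.1)) *
    (Real.sin ((c:ℝ) * z.2) * Real.cos ((d:ℝ) * z.2))

lemma bra_cc_cc (m n p q : ℤ) : bra (cc m n) (cc p q) =
    ((m:ℝ) * n * ((q:ℝ)^4 - (p:ℝ)^4)) • scsc m p n q
    + (3 * (n:ℝ)^3 * p * (q:ℝ)^2) • scsc p m n q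
    + (-(3 * (m:ℝ)^3 * (p:ℝ)^2 * q)) • scsc m p q n
    + (2 * (n:ℝ)^2 * p * (q:ℝ)^3 - 2 * (m:ℝ)^2 * (p:ℝ)^3 * q) • scsc p m q n := by
  funext z
  simp only [bra, cc, pdx_sep_fc, pdx_sep_fs, pdy_sep_fc, pdy_sep_fs,
    Pi.add_apply, Pi.smul_apply, smul_eq_mul, scsc, sep, fs, fc]
  ring

lemma scsc_mem (a b c d : ℤ) : scsc a b c d ∈ Osp := by
  have h : scsc a b c d = (1/4 : ℝ) •
      (ss (a+b) (c+d) + ss (a+b) (c-d) + ss (a-b) (c+d) + ss (a-b) (c-d)) := by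
    funext z
    simp only [scsc, ss, sep, fs, Pi.smul_apply, Pi.add_apply, smul_eq_mul]
    push_cast
    rw [show ((a:ℝ)+(b:ℝ)) * z.1 = (a:ℝ)*z.1 + (b:ℝ)*z.1 from by ring,
      show ((a:ℝ)-(b:ℝ)) * z.1 = (a:ℝ)*z.1 - (b:ℝ)*z.1 from by ring,
      show ((c:ℝ)+(d:ℝ)) * z.2 = (c:ℝ)*z.2 + (d:ℝ)*z.2 from by ring,
      show ((c:ℝ)-(d:ℝ)) * z.2 = (c:ℝ)*z.2 - (d:ℝ)*z.2 from by ring]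
    simp only [Real.sin_add, Real.sin_sub]
    ring
  rw [h]
  refine Submodule.smul_mem _ _ (add_mem (add_mem (add_mem ?_ ?_) ?_) ?_) <;>
    exact Submodule.subset_span ⟨_, _, rfl⟩

lemma bra_cc_mem (m n p q : ℤ) : bra (cc m n) (cc p q) ∈ Osp := by
  rw [bra_cc_cc]
  exact add_mem (add_mem (add_mem (Submodule.smul_mem _ _ (scsc_mem _ _ _ _))
    (Submodule.smul_mem _ _ (scsc_mem _ _ _ _))) (Submodule.smul_mem _ _ (scsc_mem _ _ _ _)))
    (Submodule.smul_mem _ _ (scsc_mem _ _ _ _))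

lemma bra_cc_sigma (m n p q : ℤ) (z : ℝ × ℝ) :
    bra (cc m n) (cc p q) (z.2, z.1) = - bra (cc n m) (cc q p) z := by
  rw [bra_cc_cc, bra_cc_cc]
  simp only [Pi.add_apply, Pi.smul_apply, smul_eq_mul, scsc]
  ring

end Spans
section Bilinear

variable {f f₁ f₂ g g₁ g₂ : ℝ × ℝ → ℝ}

lemma bra_add_left (h1 : ContDiff ℝ (⊤ : ℕ∞) f₁) (h2 : ContDiff ℝ (⊤ : ℕ∞) f₂) (g : ℝ × ℝ → ℝ) :
    bra (f₁ + f₂) g = bra f₁ g + bra f₂ g := by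
  have e1 : pdx (f₁ + f₂) = pdx f₁ + pdx f₂ := pdx_add h1 h2
  have e2 : pdy (pdx f₁ + pdx f₂) = pdy (pdx f₁) + pdy (pdx f₂) :=
    pdy_add (pdx_smooth h1) (pdx_smooth h2)
  have e3 : pdx (pdx f₁ + pdx f₂) = pdx (pdx f₁) + pdx (pdx f₂) :=
    pdx_add (pdx_smooth h1) (pdx_smooth h2)
  have e4 : pdx (pdx (pdx f₁) + pdx (pdx f₂)) = pdx (pdx (pdx f₁)) + pdx (pdx (pdx f₂)) :=
    pdx_add (pdx_smooth (pdx_smooth h1)) (pdx_smooth (pdx_smooth h2))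
  have e5 : pdy (f₁ + f₂) = pdy f₁ + pdy f₂ := pdy_add h1 h2
  have e6 : pdy (pdy f₁ + pdy f₂) = pdy (pdy f₁) + pdy (pdy f₂) :=
    pdy_add (pdy_smooth h1) (pdy_smooth h2)
  have e7 : pdy (pdy (pdy f₁) + pdy (pdy f₂)) = pdy (pdy (pdy f₁)) + pdy (pdy (pdy f₂)) :=
    pdy_add (pdy_smooth (pdy_smooth h1)) (pdy_smooth (pdy_smooth h2))
  funext z
  simp only [bra, e1, e2, e3, e4, e5, e6, e7, Pi.add_apply]
  ring

lemma bra_smul_left (c : ℝ) (h1 : ContDiff ℝ (⊤ : ℕ∞) f) (g : ℝ × ℝ → ℝ) :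
    bra (c • f) g = c • bra f g := by
  have e1 : pdx (c • f) = c • pdx f := pdx_smul c h1
  have e2 : pdy (c • pdx f) = c • pdy (pdx f) := pdy_smul c (pdx_smooth h1)
  have e3 : pdx (c • pdx f) = c • pdx (pdx f) := pdx_smul c (pdx_smooth h1)
  have e4 : pdx (c • pdx (pdx f)) = c • pdx (pdx (pdx f)) :=
    pdx_smul c (pdx_smooth (pdx_smooth h1))
  have e5 : pdy (c • f) = c • pdy f := pdy_smul c h1
  have e6 : pdy (c • pdy f) = c • pdy (pdy f) := pdy_smul c (pdy_smooth h1)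
  have e7 : pdy (c • pdy (pdy f)) = c • pdy (pdy (pdy f)) :=
    pdy_smul c (pdy_smooth (pdy_smooth h1))
  funext z
  simp only [bra, e1, e2, e3, e4, e5, e6, e7, Pi.smul_apply, smul_eq_mul]
  ring

lemma bra_zero_left (g : ℝ × ℝ → ℝ) : bra 0 g = 0 := by
  funext z
  simp only [bra, pdx_zero, pdy_zero, Pi.zero_apply]
  ring

lemma bra_add_right (f : ℝ × ℝ → ℝ) (h1 : ContDiff ℝ (⊤ : ℕ∞) g₁) (h2 : ContDiff ℝ (⊤ : ℕ∞) g₂) :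
    bra f (g₁ + g₂) = bra f g₁ + bra f g₂ := by
  have s1 := pdx_smooth h1; have s1' := pdx_smooth h2
  have s2 := pdx_smooth s1; have s2' := pdx_smooth s1'
  have s3 := pdx_smooth s2; have s3' := pdx_smooth s2'
  have t1 := pdy_smooth h1; have t1' := pdy_smooth h2
  have t2 := pdy_smooth t1; have t2' := pdy_smooth t1'
  have t3 := pdy_smooth t2; have t3' := pdy_smooth t2'
  have u1 := pdy_smooth s1; have u1' := pdy_smooth s1'
  have u2 := pdy_smooth u1; have u2' := pdy_smooth u1'
  have v1 := pdy_smooth s2; have v1' := pdy_smooth s2'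
  have e1 : pdx (g₁ + g₂) = pdx g₁ + pdx g₂ := pdx_add h1 h2
  have e2 : pdx (pdx g₁ + pdx g₂) = pdx (pdx g₁) + pdx (pdx g₂) := pdx_add s1 s1'
  have e3 : pdx (pdx (pdx g₁) + pdx (pdx g₂)) = pdx (pdx (pdx g₁)) + pdx (pdx (pdx g₂)) :=
    pdx_add s2 s2'
  have e4 : pdx (pdx (pdx (pdx g₁)) + pdx (pdx (pdx g₂)))
      = pdx (pdx (pdx (pdx g₁))) + pdx (pdx (pdx (pdx g₂))) := pdx_add s3 s3'
  have e5 : pdy (g₁ + g₂) = pdy g₁ + pdy g₂ := pdy_add h1 h2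
  have e6 : pdy (pdy g₁ + pdy g₂) = pdy (pdy g₁) + pdy (pdy g₂) := pdy_add t1 t1'
  have e7 : pdy (pdy (pdy g₁) + pdy (pdy g₂)) = pdy (pdy (pdy g₁)) + pdy (pdy (pdy g₂)) :=
    pdy_add t2 t2'
  have e8 : pdy (pdy (pdy (pdy g₁)) + pdy (pdy (pdy g₂)))
      = pdy (pdy (pdy (pdy g₁))) + pdy (pdy (pdy (pdy g₂))) := pdy_add t3 t3'
  have e9 : pdy (pdx g₁ + pdx g₂) = pdy (pdx g₁) + pdy (pdx g₂) := pdy_add s1 s1'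
  have e10 : pdy (pdx (pdx g₁) + pdx (pdx g₂)) = pdy (pdx (pdx g₁)) + pdy (pdx (pdx g₂)) :=
    pdy_add s2 s2'
  have e11 : pdy (pdx (pdx (pdx g₁)) + pdx (pdx (pdx g₂)))
      = pdy (pdx (pdx (pdx g₁))) + pdy (pdx (pdx (pdx g₂))) := pdy_add s3 s3'
  have e12 : pdy (pdy (pdx g₁) + pdy (pdx g₂)) = pdy (pdy (pdx g₁)) + pdy (pdy (pdx g₂)) :=
    pdy_add u1 u1'
  have e13 : pdy (pdy (pdy (pdx g₁)) + pdy (pdy (pdx g₂)))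
      = pdy (pdy (pdy (pdx g₁))) + pdy (pdy (pdy (pdx g₂))) := pdy_add u2 u2'
  funext z
  simp only [bra, e1, e2, e3, e4, e5, e6, e7, e8, e9, e10, e11, e12, e13, Pi.add_apply]
  ring

lemma bra_smul_right (f : ℝ × ℝ → ℝ) (c : ℝ) (h1 : ContDiff ℝ (⊤ : ℕ∞) g) :
    bra f (c • g) = c • bra f g := by
  have s1 := pdx_smooth h1
  have s2 := pdx_smooth s1
  have s3 := pdx_smooth s2
  have t1 := pdy_smooth h1
  have t2 := pdy_smooth t1
  have t3 := pdy_smooth t2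
  have u1 := pdy_smooth s1
  have u2 := pdy_smooth u1
  have e1 : pdx (c • g) = c • pdx g := pdx_smul c h1
  have e2 : pdx (c • pdx g) = c • pdx (pdx g) := pdx_smul c s1
  have e3 : pdx (c • pdx (pdx g)) = c • pdx (pdx (pdx g)) := pdx_smul c s2
  have e4 : pdx (c • pdx (pdx (pdx g))) = c • pdx (pdx (pdx (pdx g))) := pdx_smul c s3
  have e5 : pdy (c • g) = c • pdy g := pdy_smul c h1
  have e6 : pdy (c • pdy g) = c • pdy (pdy g) := pdy_smul c t1
  have e7 : pdy (c • pdy (pdy g)) = c • pdy (pdy (pdy g)) := pdy_smul c t2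
  have e8 : pdy (c • pdy (pdy (pdy g))) = c • pdy (pdy (pdy (pdy g))) := pdy_smul c t3
  have e9 : pdy (c • pdx g) = c • pdy (pdx g) := pdy_smul c s1
  have e10 : pdy (c • pdx (pdx g)) = c • pdy (pdx (pdx g)) := pdy_smul c s2
  have e11 : pdy (c • pdx (pdx (pdx g))) = c • pdy (pdx (pdx (pdx g))) := pdy_smul c s3
  have e12 : pdy (c • pdy (pdx g)) = c • pdy (pdy (pdx g)) := pdy_smul c u1
  have e13 : pdy (c • pdy (pdy (pdx g))) = c • pdy (pdy (pdy (pdx g))) := pdy_smul c u2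
  funext z
  simp only [bra, e1, e2, e3, e4, e5, e6, e7, e8, e9, e10, e11, e12, e13,
    Pi.smul_apply, smul_eq_mul]
  ring

lemma bra_zero_right (f : ℝ × ℝ → ℝ) : bra f 0 = 0 := by
  funext z
  simp only [bra, pdx_zero, pdy_zero, Pi.zero_apply]
  ring

lemma bra_mem {f g : ℝ × ℝ → ℝ} (hf : f ∈ Esp) (hg : g ∈ Esp) : bra f g ∈ Osp := by
  induction hf, hg using Submodule.span_induction₂ with
  | mem_mem x y hx hy =>
    obtain ⟨a, b, rfl⟩ := hx; obtain ⟨c, d, rfl⟩ := hy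
    exact bra_cc_mem a b c d
  | zero_left y hy => rw [bra_zero_left]; exact zero_mem _
  | zero_right x hx => rw [bra_zero_right]; exact zero_mem _
  | add_left x y zz hx hy hz ihx ihy =>
    rw [bra_add_left (Esp_smooth hx) (Esp_smooth hy)]
    exact add_mem ihx ihy
  | add_right x y zz hx hy hz ihx ihy =>
    rw [bra_add_right _ (Esp_smooth hy) (Esp_smooth hz)]
    exact add_mem ihx ihy
  | smul_left c x y hx hy ih =>
    rw [bra_smul_left c (Esp_smooth hx)]
    exact Submodule.smul_mem _ _ ih
  | smul_right c x y hx hy ih =>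
    rw [bra_smul_right _ c (Esp_smooth hy)]
    exact Submodule.smul_mem _ _ ih

/-- swap of a function -/
def swapf (f : ℝ × ℝ → ℝ) : ℝ × ℝ → ℝ := fun z => f (z.2, z.1)

lemma swapf_smooth (hf : ContDiff ℝ (⊤ : ℕ∞) f) : ContDiff ℝ (⊤ : ℕ∞) (swapf f) :=
  hf.comp (contDiff_snd.prodMk contDiff_fst)

lemma swapf_cc (a b : ℤ) : swapf (cc a b) = cc b a := by
  funext z
  show (1:ℝ) * (Real.cos ((a:ℝ) * z.2) * Real.cos ((b:ℝ) * z.1)) = _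
  show _ = (1:ℝ) * (Real.cos ((b:ℝ) * z.1) * Real.cos ((a:ℝ) * z.2))
  ring

lemma bra_sigma' {f g : ℝ × ℝ → ℝ} (hf : f ∈ Esp) (hg : g ∈ Esp) :
    ∀ z : ℝ × ℝ, bra f g (z.2, z.1) = - bra (swapf f) (swapf g) z := by
  induction hf, hg using Submodule.span_induction₂ with
  | mem_mem x y hx hy =>
    obtain ⟨a, b, rfl⟩ := hx; obtain ⟨c, d, rfl⟩ := hy
    intro z
    rw [swapf_cc, swapf_cc]
    exact bra_cc_sigma a b c d z
  | zero_left y hy =>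
    intro z
    have : swapf (0 : ℝ × ℝ → ℝ) = 0 := rfl
    rw [bra_zero_left, this, bra_zero_left]
    simp
  | zero_right x hx =>
    intro z
    have : swapf (0 : ℝ × ℝ → ℝ) = 0 := rfl
    rw [bra_zero_right, this, bra_zero_right]
    simp
  | add_left x y zz hx hy hz ihx ihy =>
    intro z
    have hsw : swapf (x + y) = swapf x + swapf y := rfl
    rw [bra_add_left (Esp_smooth hx) (Esp_smooth hy), hsw,
      bra_add_left (swapf_smooth (Esp_smooth hx)) (swapf_smooth (Esp_smooth hy))]
    simp only [Pi.add_apply, ihx z, ihy z]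
    ring
  | add_right x y zz hx hy hz ihx ihy =>
    intro z
    have hsw : swapf (y + zz) = swapf y + swapf zz := rfl
    rw [bra_add_right _ (Esp_smooth hy) (Esp_smooth hz), hsw,
      bra_add_right _ (swapf_smooth (Esp_smooth hy)) (swapf_smooth (Esp_smooth hz))]
    simp only [Pi.add_apply, ihx z, ihy z]
    ring
  | smul_left c x y hx hy ih =>
    intro z
    have hsw : swapf (c • x) = c • swapf x := rfl
    rw [bra_smul_left c (Esp_smooth hx), hsw, bra_smul_left c (swapf_smooth (Esp_smooth hx))]
    simp only [Pi.smul_apply, smul_eq_mul, ih z]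
    ring
  | smul_right c x y hx hy ih =>
    intro z
    have hsw : swapf (c • y) = c • swapf y := rfl
    rw [bra_smul_right _ c (Esp_smooth hy), hsw,
      bra_smul_right _ c (swapf_smooth (Esp_smooth hy))]
    simp only [Pi.smul_apply, smul_eq_mul, ih z]
    ring

lemma bra_sigma {f g : ℝ × ℝ → ℝ} (hf : f ∈ Esp) (hg : g ∈ Esp)
    (hfs : ∀ z : ℝ × ℝ, f (z.2, z.1) = f z) (hgs : ∀ z : ℝ × ℝ, g (z.2, z.1) = g z)
    (z : ℝ × ℝ) : bra f g (z.2, z.1) = - bra f g z := by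
  have h1 : swapf f = f := funext fun z => hfs z
  have h2 : swapf g = g := funext fun z => hgs z
  have := bra_sigma' hf hg z
  rwa [h1, h2] at this

end Bilinear
section Solve

variable {f g F : ℝ × ℝ → ℝ}

lemma Lop_add (h1 : ContDiff ℝ (⊤ : ℕ∞) f) (h2 : ContDiff ℝ (⊤ : ℕ∞) g) :
    Lop (f + g) = Lop f + Lop g := by
  have s1 := pdx_smooth h1; have s1' := pdx_smooth h2
  have s2 := pdx_smooth s1; have s2' := pdx_smooth s1'
  have s3 := pdx_smooth s2; have s3' := pdx_smooth s2'
  have u1 := pdy_smooth s1; have u1' := pdy_smooth s1'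
  have u2 := pdy_smooth u1; have u2' := pdy_smooth u1'
  have e1 : pdx (f + g) = pdx f + pdx g := pdx_add h1 h2
  have e2 : pdx (pdx f + pdx g) = pdx (pdx f) + pdx (pdx g) := pdx_add s1 s1'
  have e3 : pdx (pdx (pdx f) + pdx (pdx g)) = pdx (pdx (pdx f)) + pdx (pdx (pdx g)) :=
    pdx_add s2 s2'
  have e4 : pdy (pdx f + pdx g) = pdy (pdx f) + pdy (pdx g) := pdy_add s1 s1'
  have e5 : pdy (pdy (pdx f) + pdy (pdx g)) = pdy (pdy (pdx f)) + pdy (pdy (pdx g)) :=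
    pdy_add u1 u1'
  have e6 : pdy (pdy (pdy (pdx f)) + pdy (pdy (pdx g)))
      = pdy (pdy (pdy (pdx f))) + pdy (pdy (pdy (pdx g))) := pdy_add u2 u2'
  have e7 : pdy (pdx (pdx (pdx f)) + pdx (pdx (pdx g)))
      = pdy (pdx (pdx (pdx f))) + pdy (pdx (pdx (pdx g))) := pdy_add s3 s3'
  funext z
  simp only [Lop, e1, e2, e3, e4, e5, e6, e7, Pi.add_apply]
  ring

lemma Lop_smul (c : ℝ) (h1 : ContDiff ℝ (⊤ : ℕ∞) f) : Lop (c • f) = c • Lop f := by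
  have s1 := pdx_smooth h1
  have s2 := pdx_smooth s1
  have s3 := pdx_smooth s2
  have u1 := pdy_smooth s1
  have u2 := pdy_smooth u1
  have e1 : pdx (c • f) = c • pdx f := pdx_smul c h1
  have e2 : pdx (c • pdx f) = c • pdx (pdx f) := pdx_smul c s1
  have e3 : pdx (c • pdx (pdx f)) = c • pdx (pdx (pdx f)) := pdx_smul c s2
  have e4 : pdy (c • pdx f) = c • pdy (pdx f) := pdy_smul c s1
  have e5 : pdy (c • pdy (pdx f)) = c • pdy (pdy (pdx f)) := pdy_smul c u1
  have e6 : pdy (c • pdy (pdy (pdx f))) = c • pdy (pdy (pdy (pdx f))) := pdy_smul c u2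
  have e7 : pdy (c • pdx (pdx (pdx f))) = c • pdy (pdx (pdx (pdx f))) := pdy_smul c s3
  funext z
  simp only [Lop, e1, e2, e3, e4, e5, e6, e7, Pi.smul_apply, smul_eq_mul]
  ring

lemma Lop_zero : Lop (0 : ℝ × ℝ → ℝ) = 0 := by
  funext z
  simp only [Lop, pdx_zero, pdy_zero, Pi.zero_apply]
  ring

lemma cc_sigma (a b : ℤ) (z : ℝ × ℝ) : cc a b (z.2, z.1) = cc b a z := by
  show (1:ℝ) * (Real.cos ((a:ℝ) * z.2) * Real.cos ((b:ℝ) * z.1))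
    = (1:ℝ) * (Real.cos ((b:ℝ) * z.1) * Real.cos ((a:ℝ) * z.2))
  ring

lemma ss_swapf (a b : ℤ) : swapf (ss a b) = ss b a := by
  funext z
  show (1:ℝ) * (Real.sin ((a:ℝ) * z.2) * Real.sin ((b:ℝ) * z.1))
    = (1:ℝ) * (Real.sin ((b:ℝ) * z.1) * Real.sin ((a:ℝ) * z.2))
  ring

lemma antisym_mem_Asp (hF : F ∈ Osp) (hs : ∀ z : ℝ × ℝ, F (z.2, z.1) = -F z) : F ∈ Asp := by
  have key : ∀ G, G ∈ Osp → ((1/2 : ℝ) • (G - swapf G)) ∈ Asp := by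
    intro G hG
    induction hG using Submodule.span_induction with
    | mem x h =>
      obtain ⟨a, b, rfl⟩ := h
      rw [ss_swapf]
      exact Submodule.smul_mem _ _ (Submodule.subset_span ⟨a, b, rfl⟩)
    | zero =>
      have : ((1/2 : ℝ) • ((0 : ℝ × ℝ → ℝ) - swapf 0)) = 0 := by
        funext z; simp [swapf]
      rw [this]; exact zero_mem _
    | add x y hx hy ihx ihy =>
      have : ((1/2 : ℝ) • ((x + y) - swapf (x + y)))
          = (1/2 : ℝ) • (x - swapf x) + (1/2 : ℝ) • (y - swapf y) := by
        funext z; simp [swapf]; ring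
      rw [this]; exact add_mem ihx ihy
    | smul c x hx ih =>
      have : ((1/2 : ℝ) • ((c • x) - swapf (c • x))) = c • ((1/2 : ℝ) • (x - swapf x)) := by
        funext z; simp [swapf]; ring
      rw [this]; exact Submodule.smul_mem _ _ ih
  have hFe : F = (1/2 : ℝ) • (F - swapf F) := by
    funext z
    have := hs (z.2, z.1)
    simp only [Pi.smul_apply, Pi.sub_apply, smul_eq_mul, swapf]
    rw [show F (z.2, z.1) = -F z from hs z]
    ring
  rw [hFe]
  exact key F hF

lemma solve (hF : F ∈ Asp) :
    ∃ h, h ∈ Esp ∧ (∀ z : ℝ × ℝ, h (z.2, z.1) = h z) ∧ Lop h = F := by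
  induction hF using Submodule.span_induction with
  | mem x h =>
    obtain ⟨a, b, rfl⟩ := h
    by_cases hD : (a:ℝ) * b * ((a:ℝ)^2 - (b:ℝ)^2) = 0
    · refine ⟨0, zero_mem _, fun z => rfl, ?_⟩
      rw [Lop_zero]
      have h2 : (a:ℝ) = 0 ∨ (b:ℝ) = 0 ∨ (a:ℝ) - b = 0 ∨ (a:ℝ) + b = 0 := by
        have h3 : (a:ℝ) * ((b:ℝ) * (((a:ℝ) - b) * ((a:ℝ) + b))) = 0 := by
          linear_combination hD
        simpa [mul_eq_zero, or_assoc] using h3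
      funext z
      show (0:ℝ) = (1:ℝ) * (Real.sin ((a:ℝ)*z.1) * Real.sin ((b:ℝ)*z.2))
        - (1:ℝ) * (Real.sin ((b:ℝ)*z.1) * Real.sin ((a:ℝ)*z.2))
      rcases h2 with h | h | h | h
      · rw [h]; simp
      · rw [h]; simp
      · rw [show (a:ℝ) = b from by linarith]; ring
      · rw [show (a:ℝ) = -b from by linarith]
        rw [show (-(b:ℝ)) * z.1 = -((b:ℝ) * z.1) from by ring,
          show (-(b:ℝ)) * z.2 = -((b:ℝ) * z.2) from by ring, Real.sin_neg, Real.sin_neg]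
        ring
    · set D : ℝ := (a:ℝ) * b * ((a:ℝ)^2 - (b:ℝ)^2) with hDdef
      refine ⟨D⁻¹ • (cc a b + cc b a), ?_, ?_, ?_⟩
      · exact Submodule.smul_mem _ _ (add_mem (Submodule.subset_span ⟨a, b, rfl⟩)
          (Submodule.subset_span ⟨b, a, rfl⟩))
      · intro z
        simp only [Pi.smul_apply, Pi.add_apply, smul_eq_mul, cc_sigma]
        ring
      · rw [Lop_smul (f := cc a b + cc b a) D⁻¹ ((cc_smooth a b).add (cc_smooth b a)),
          Lop_add (cc_smooth a b) (cc_smooth b a), Lop_cc, Lop_cc]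
        funext z
        simp only [Pi.smul_apply, Pi.add_apply, Pi.sub_apply, smul_eq_mul]
        have hb : (b:ℝ) * a * ((b:ℝ)^2 - (a:ℝ)^2) = -D := by rw [hDdef]; ring
        rw [hb]
        field_simp
        ring
  | zero => exact ⟨0, zero_mem _, fun z => rfl, Lop_zero⟩
  | add x y hx hy ihx ihy =>
    obtain ⟨h1, m1, s1, L1⟩ := ihx
    obtain ⟨h2, m2, s2, L2⟩ := ihy
    refine ⟨h1 + h2, add_mem m1 m2, ?_, ?_⟩
    · intro z; simp only [Pi.add_apply, s1 z, s2 z]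
    · rw [Lop_add (Esp_smooth m1) (Esp_smooth m2), L1, L2]
  | smul c x hx ih =>
    obtain ⟨h1, m1, s1, L1⟩ := ih
    refine ⟨c • h1, Submodule.smul_mem _ _ m1, ?_, ?_⟩
    · intro z; simp only [Pi.smul_apply, smul_eq_mul, s1 z]
    · rw [Lop_smul c (Esp_smooth m1), L1]

end Solve
section Construction

def Good (f : ℝ × ℝ → ℝ) : Prop := f ∈ Esp ∧ ∀ z : ℝ × ℝ, f (z.2, z.1) = f z

open Classical in
noncomputable def pick (F : ℝ × ℝ → ℝ) : ℝ × ℝ → ℝ :=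
  if h : ∃ g, Good g ∧ Lop g = F then h.choose else 0

noncomputable def seq (f0 : ℝ × ℝ → ℝ) : ℕ → ℝ × ℝ → ℝ
  | 0 => f0
  | k+1 => pick (fun z => ∑ s : Fin (k+1), bra (seq f0 s.1) (seq f0 (k - s.1)) z)
  termination_by k => k
  decreasing_by
  · exact s.isLt
  · exact Nat.lt_succ_of_le (Nat.sub_le k s.1)

variable {f0 : ℝ × ℝ → ℝ}

lemma seq_good (h0 : Good f0) : ∀ k, Good (seq f0 k) := by
  intro k
  induction k using Nat.strong_induction_on with
  | _ k ih =>
    match k with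
    | 0 => rw [seq]; exact h0
    | (k+1) =>
      have hFeq : (fun z => ∑ s : Fin (k+1), bra (seq f0 s.1) (seq f0 (k - s.1)) z)
          = ∑ s : Fin (k+1), bra (seq f0 s.1) (seq f0 (k - s.1)) := by
        funext z; rw [Finset.sum_apply]
      have hmem : (fun z => ∑ s : Fin (k+1), bra (seq f0 s.1) (seq f0 (k - s.1)) z) ∈ Osp := by
        rw [hFeq]
        exact Submodule.sum_mem _ fun s _ =>
          bra_mem (ih s.1 s.isLt).1 (ih (k - s.1) (Nat.lt_succ_of_le (Nat.sub_le k s.1))).1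
      have hanti : ∀ z : ℝ × ℝ,
          (fun z => ∑ s : Fin (k+1), bra (seq f0 s.1) (seq f0 (k - s.1)) z) (z.2, z.1)
          = -(fun z => ∑ s : Fin (k+1), bra (seq f0 s.1) (seq f0 (k - s.1)) z) z := by
        intro z
        show (∑ s : Fin (k+1), bra (seq f0 s.1) (seq f0 (k - s.1)) (z.2, z.1)) = _
        rw [← Finset.sum_neg_distrib]
        refine Finset.sum_congr rfl fun s _ => ?_
        have g1 := ih s.1 s.isLt
        have g2 := ih (k - s.1) (Nat.lt_succ_of_le (Nat.sub_le k s.1))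
        exact bra_sigma g1.1 g2.1 g1.2 g2.2 z
      have hex : ∃ g, Good g ∧ Lop g
          = (fun z => ∑ s : Fin (k+1), bra (seq f0 s.1) (seq f0 (k - s.1)) z) := by
        obtain ⟨h, hm, hs, hL⟩ := solve (antisym_mem_Asp hmem hanti)
        exact ⟨h, ⟨hm, hs⟩, hL⟩
      show Good (seq f0 (k+1))
      rw [seq, pick, dif_pos hex]
      exact hex.choose_spec.1

lemma seq_L (h0 : Good f0) (k : ℕ) :
    Lop (seq f0 (k+1)) = fun z => ∑ s : Fin (k+1), bra (seq f0 s.1) (seq f0 (k - s.1)) z := by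
  have hFeq : (fun z => ∑ s : Fin (k+1), bra (seq f0 s.1) (seq f0 (k - s.1)) z)
      = ∑ s : Fin (k+1), bra (seq f0 s.1) (seq f0 (k - s.1)) := by
    funext z; rw [Finset.sum_apply]
  have hmem : (fun z => ∑ s : Fin (k+1), bra (seq f0 s.1) (seq f0 (k - s.1)) z) ∈ Osp := by
    rw [hFeq]
    exact Submodule.sum_mem _ fun s _ =>
      bra_mem (seq_good h0 s.1).1 (seq_good h0 (k - s.1)).1
  have hanti : ∀ z : ℝ × ℝ,
      (fun z => ∑ s : Fin (k+1), bra (seq f0 s.1) (seq f0 (k - s.1)) z) (z.2, z.1)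
      = -(fun z => ∑ s : Fin (k+1), bra (seq f0 s.1) (seq f0 (k - s.1)) z) z := by
    intro z
    show (∑ s : Fin (k+1), bra (seq f0 s.1) (seq f0 (k - s.1)) (z.2, z.1)) = _
    rw [← Finset.sum_neg_distrib]
    refine Finset.sum_congr rfl fun s _ => ?_
    have g1 := seq_good h0 s.1
    have g2 := seq_good h0 (k - s.1)
    exact bra_sigma g1.1 g2.1 g1.2 g2.2 z
  have hex : ∃ g, Good g ∧ Lop g
      = (fun z => ∑ s : Fin (k+1), bra (seq f0 s.1) (seq f0 (k - s.1)) z) := by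
    obtain ⟨h, hm, hs, hL⟩ := solve (antisym_mem_Asp hmem hanti)
    exact ⟨h, ⟨hm, hs⟩, hL⟩
  show Lop (seq f0 (k+1)) = _
  rw [seq, pick, dif_pos hex]
  exact hex.choose_spec.2

end Construction

theorem formal_series_solution_exists
    (N : ℕ) (α β : ℕ → ℝ) (lam₀ : ℝ × ℝ → ℝ)
    (hlam₀ : lam₀ = fun z =>
      (∑ n ∈ Finset.Icc 1 N, α n * (Real.cos (n * z.1) + Real.cos (n * z.2)))
        + ∑ n ∈ Finset.Icc 1 N, β n * (Real.cos (n * (z.1 - z.2)) + Real.cos (n * (z.1 + z.2)))) :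
    ∃ lam : ℕ → ℝ × ℝ → ℝ,
      lam 0 = lam₀
      ∧ (∀ k, ContDiff ℝ (⊤ : ℕ∞) (lam k))
      ∧ (∀ k z, lam k (z.1 + 2 * Real.pi, z.2) = lam k z
          ∧ lam k (z.1, z.2 + 2 * Real.pi) = lam k z)
      ∧ (∀ k z, lam k (-z.1, z.2) = lam k z
          ∧ lam k (z.1, -z.2) = lam k z
          ∧ lam k (z.2, z.1) = lam k z)
      ∧ (∀ k, 1 ≤ k → ∀ z,
          pdy (pdy (pdy (pdx (lam k)))) z - pdy (pdx (pdx (pdx (lam k)))) z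
            = ∑ s ∈ Finset.range k, bra (lam s) (lam (k - s - 1)) z) := by
  have hmem : lam₀ ∈ Esp := by
    have heq : lam₀ = ∑ n ∈ Finset.Icc 1 N,
        (α n • (cc (n:ℤ) 0 + cc 0 (n:ℤ)) + (2 * β n) • cc (n:ℤ) (n:ℤ)) := by
      funext z
      simp only [hlam₀]
      rw [Finset.sum_apply, ← Finset.sum_add_distrib]
      refine Finset.sum_congr rfl fun n hn => ?_
      simp only [Pi.add_apply, Pi.smul_apply, smul_eq_mul]
      rw [show (n:ℝ) * (z.1 - z.2) = (n:ℝ)*z.1 - (n:ℝ)*z.2 from by ring,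
        show (n:ℝ) * (z.1 + z.2) = (n:ℝ)*z.1 + (n:ℝ)*z.2 from by ring,
        Real.cos_sub, Real.cos_add]
      simp only [cc, sep, fc, Int.cast_natCast, Int.cast_zero, zero_mul, Real.cos_zero,
        mul_one, one_mul]
      ring
    rw [heq]
    exact Submodule.sum_mem _ fun n _ =>
      add_mem (Submodule.smul_mem _ _ (add_mem (Submodule.subset_span ⟨_, _, rfl⟩)
        (Submodule.subset_span ⟨_, _, rfl⟩)))
        (Submodule.smul_mem _ _ (Submodule.subset_span ⟨_, _, rfl⟩))
  have hsym : ∀ z : ℝ × ℝ, lam₀ (z.2, z.1) = lam₀ z := by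
    intro z
    simp only [hlam₀]
    congr 1
    · exact Finset.sum_congr rfl fun n _ => by ring
    · refine Finset.sum_congr rfl fun n _ => ?_
      rw [show (n:ℝ) * (z.2 - z.1) = -((n:ℝ) * (z.1 - z.2)) from by ring, Real.cos_neg,
        show (n:ℝ) * (z.2 + z.1) = (n:ℝ) * (z.1 + z.2) from by ring]
  have h0 : Good lam₀ := ⟨hmem, hsym⟩
  refine ⟨seq lam₀, ?_, ?_, ?_, ?_, ?_⟩
  · rw [seq]
  · intro k; exact Esp_smooth (seq_good h0 k).1
  · intro k z; exact Esp_periodic (seq_good h0 k).1 z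
  · intro k z
    exact ⟨(Esp_even (seq_good h0 k).1 z).1, (Esp_even (seq_good h0 k).1 z).2,
      (seq_good h0 k).2 z⟩
  · intro k hk z
    obtain ⟨j, rfl⟩ : ∃ j, k = j + 1 := ⟨k - 1, by omega⟩
    have hL := congrFun (seq_L h0 j) z
    show Lop (seq lam₀ (j+1)) z = _
    rw [hL]
    show (∑ s : Fin (j+1), bra (seq lam₀ s.1) (seq lam₀ (j - s.1)) z) = _
    rw [Fin.sum_univ_eq_sum_range (fun s => bra (seq lam₀ s) (seq lam₀ (j - s)) z) (j+1)]
    refine Finset.sum_congr rfl fun s hs => ?_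
    have : j - s = j + 1 - s - 1 := by omega
    rw [this]
end

section
/- Let Γ ⊂ ℝ² be a lattice and let h : ℝ² → ℝ be a smooth function all of whose second partial derivatives h_xx, h_xy, h_yy are Γ-periodic. Then there exist real constants a₁₁, a₁₂, a₂₂, b₁, b₂, b₀ and a smooth Γ-periodic function λ : ℝ² → ℝ such that h(x,y) = λ(x,y) + a₁₁ x² + 2a₁₂ x y + a₂₂ y² + b₁ x + b₂ y + b₀ for all (x,y) ∈ ℝ². -/
open Real Finset

/-- A function is periodic with respect to the lattice generated by `v` and `w`. -/
def LatticePeriodic (v w : ℝ × ℝ) (u : ℝ × ℝ → ℝ) : Prop :=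
  ∀ z, u (z + v) = u z ∧ u (z + w) = u z

lemma clm_apply_basis (L : ℝ×ℝ →L[ℝ] ℝ) (z : ℝ×ℝ) :
    L z = z.1 * L (1,0) + z.2 * L (0,1) := by
  have hz : z = z.1 • ((1:ℝ),(0:ℝ)) + z.2 • ((0:ℝ),(1:ℝ)) := by ext <;> simp
  rw [hz, map_add, map_smul, map_smul]; simp

lemma clm_ext2 {L M : ℝ×ℝ →L[ℝ] ℝ} (h1 : L (1,0) = M (1,0)) (h2 : L (0,1) = M (0,1)) :
    L = M := by
  apply ContinuousLinearMap.ext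
  intro u
  rw [clm_apply_basis L, clm_apply_basis M, h1, h2]

lemma pdx_eq (f : ℝ×ℝ → ℝ) (hf : Differentiable ℝ f) :
    pdx f = fun p => fderiv ℝ f p (1,0) := by
  funext p
  have inner : HasDerivAt (fun s : ℝ => (s, p.2)) ((1:ℝ),(0:ℝ)) p.1 :=
    (hasDerivAt_id p.1).prodMk (hasDerivAt_const p.1 p.2)
  have : HasDerivAt (fun s => f (s, p.2)) (fderiv ℝ f p (1,0)) p.1 := by
    have := ((hf (p.1, p.2)).hasFDerivAt.comp_hasDerivAt p.1 inner)
    simpa [Function.comp_def] using this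
  exact this.deriv

lemma pdy_eq (f : ℝ×ℝ → ℝ) (hf : Differentiable ℝ f) :
    pdy f = fun p => fderiv ℝ f p (0,1) := by
  funext p
  have inner : HasDerivAt (fun s : ℝ => (p.1, s)) ((0:ℝ),(1:ℝ)) p.2 :=
    (hasDerivAt_const p.2 p.1).prodMk (hasDerivAt_id p.2)
  have : HasDerivAt (fun s => f (p.1, s)) (fderiv ℝ f p (0,1)) p.2 := by
    have := ((hf (p.1, p.2)).hasFDerivAt.comp_hasDerivAt p.2 inner)
    simpa [Function.comp_def] using this
  exact this.deriv

lemma fderiv_shift (f : ℝ×ℝ → ℝ) (hf : Differentiable ℝ f) (c x : ℝ×ℝ) :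
    fderiv ℝ (fun y => f (y + c)) x = fderiv ℝ f (x + c) := by
  have : HasFDerivAt (fun y => f (y+c)) (fderiv ℝ f (x+c)) x := by
    simpa [Function.comp_def] using ((hf (x+c)).hasFDerivAt.comp x ((hasFDerivAt_id x).add_const c))
  exact this.fderiv

lemma affine_of_snd_deriv_zero (g : ℝ×ℝ → ℝ) (hg : ContDiff ℝ (⊤ : ℕ∞) g)
    (h11 : ∀ z, fderiv ℝ (fun y => fderiv ℝ g y (1,0)) z (1,0) = 0)
    (h12 : ∀ z, fderiv ℝ (fun y => fderiv ℝ g y (1,0)) z (0,1) = 0)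
    (h21 : ∀ z, fderiv ℝ (fun y => fderiv ℝ g y (0,1)) z (1,0) = 0)
    (h22 : ∀ z, fderiv ℝ (fun y => fderiv ℝ g y (0,1)) z (0,1) = 0) :
    ∀ z, g z = g 0 + z.1 * fderiv ℝ g 0 (1,0) + z.2 * fderiv ℝ g 0 (0,1) := by
  have hdg : Differentiable ℝ g := hg.differentiable (by simp)
  have hφ : ∀ e : ℝ×ℝ, ContDiff ℝ (⊤ : ℕ∞) (fun z => fderiv ℝ g z e) :=
    fun e => (hg.fderiv_right (by simp)).clm_apply contDiff_const
  have hc : ∀ e : ℝ×ℝ, (∀ z, fderiv ℝ (fun y => fderiv ℝ g y e) z (1,0) = 0) →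
      (∀ z, fderiv ℝ (fun y => fderiv ℝ g y e) z (0,1) = 0) →
      ∀ z, fderiv ℝ g z e = fderiv ℝ g 0 e := by
    intro e he1 he2 z
    exact is_const_of_fderiv_eq_zero ((hφ e).differentiable (by simp))
      (fun x => clm_ext2 (by simp [he1 x]) (by simp [he2 x])) z 0
  have hc1 := hc (1,0) h11 h12
  have hc2 := hc (0,1) h21 h22
  set c1 := fderiv ℝ g 0 (1,0)
  set c2 := fderiv ℝ g 0 (0,1)
  set ℓ : ℝ×ℝ →L[ℝ] ℝ := c1 • ContinuousLinearMap.fst ℝ ℝ ℝ + c2 • ContinuousLinearMap.snd ℝ ℝ ℝ with hℓ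
  have hℓapp : ∀ u : ℝ×ℝ, ℓ u = c1 * u.1 + c2 * u.2 := by intro u; simp [hℓ]
  have hψ : ∀ z, g z - ℓ z = g 0 - ℓ 0 := by
    intro z
    apply is_const_of_fderiv_eq_zero (hdg.sub ℓ.differentiable)
    intro x
    rw [fderiv_sub (hdg x) ℓ.differentiableAt, ℓ.fderiv]
    have : fderiv ℝ g x = ℓ := by
      apply clm_ext2 <;> simp [hℓapp, hc1 x, hc2 x]
    rw [this, sub_self]
  intro z
  have := hψ z
  rw [hℓapp z, hℓapp 0] at this
  simp at this
  linarith [this]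

lemma snd_deriv_swap (h : ℝ×ℝ → ℝ) (hh : ContDiff ℝ (⊤ : ℕ∞) h) (e e' z : ℝ×ℝ) :
    fderiv ℝ (fun y => fderiv ℝ h y e) z e' = fderiv ℝ (fun y => fderiv ℝ h y e') z e := by
  have hd : DifferentiableAt ℝ (fderiv ℝ h) z :=
    ((hh.fderiv_right (m := (⊤ : ℕ∞)) (by simp)).differentiable (by simp)) z
  rw [fderiv_clm_apply hd (differentiableAt_const e),
      fderiv_clm_apply hd (differentiableAt_const e')]
  simp
  exact (hh.contDiffAt.isSymmSndFDerivAt (by rw [minSmoothness_of_isRCLikeNormedField]; exact WithTop.coe_le_coe.mpr (le_top : (2 : ℕ∞) ≤ ⊤))) e' e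

lemma diff_snd_deriv_zero (f : ℝ×ℝ → ℝ) (hf : ContDiff ℝ (⊤ : ℕ∞) f) (u e e' : ℝ×ℝ)
    (hper : ∀ z, fderiv ℝ (fun y => fderiv ℝ f y e) (z + u) e'
      = fderiv ℝ (fun y => fderiv ℝ f y e) z e') :
    ∀ z, fderiv ℝ (fun y => fderiv ℝ (fun x => f (x + u) - f x) y e) z e' = 0 := by
  have hdf : Differentiable ℝ f := hf.differentiable (by simp)
  have hshift : Differentiable ℝ (fun x : ℝ×ℝ => f (x + u)) :=
    hdf.comp (differentiable_id.add_const u)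
  have hφ : ContDiff ℝ (⊤ : ℕ∞) (fun z => fderiv ℝ f z e) :=
    (hf.fderiv_right (by simp)).clm_apply contDiff_const
  have hφd : Differentiable ℝ (fun z => fderiv ℝ f z e) := hφ.differentiable (by simp)
  have hφshift : Differentiable ℝ (fun y : ℝ×ℝ => fderiv ℝ f (y + u) e) :=
    hφd.comp (differentiable_id.add_const u)
  intro z
  have e1 : fderiv ℝ (fun y => fderiv ℝ (fun x => f (x + u) - f x) y e) z
      = fderiv ℝ (fun y => fderiv ℝ f (y + u) e - fderiv ℝ f y e) z := by
    congr 1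
    funext y
    rw [fderiv_fun_sub (hshift y) (hdf y), fderiv_shift f hdf u y]
    simp
  rw [e1, fderiv_fun_sub (hφshift z) (hφd z)]
  have e2 : fderiv ℝ (fun y : ℝ×ℝ => fderiv ℝ f (y + u) e) z
      = fderiv ℝ (fun y : ℝ×ℝ => fderiv ℝ f y e) (z + u) :=
    fderiv_shift (fun y => fderiv ℝ f y e) hφd u z
  rw [e2]
  simp [hper z]

lemma solve_coeffs (v1 v2 w1 w2 p1 p2 q1 q2 cv cw : ℝ) (hD : v1*w2 - v2*w1 ≠ 0)
    (S : w1*p1 + w2*p2 = v1*q1 + v2*q2) :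
    ∃ a11 a12 a22 b1 b2 : ℝ,
      2*(a11*v1 + a12*v2) = p1 ∧ 2*(a12*v1 + a22*v2) = p2 ∧
      2*(a11*w1 + a12*w2) = q1 ∧ 2*(a12*w1 + a22*w2) = q2 ∧
      b1*v1 + b2*v2 = cv - (a11*v1^2 + 2*a12*v1*v2 + a22*v2^2) ∧
      b1*w1 + b2*w2 = cw - (a11*w1^2 + 2*a12*w1*w2 + a22*w2^2) := by
  have hD1 : w2*v1 - v2*w1 ≠ 0 := by contrapose! hD; linarith
  have hD2 : v1*w2 - w1*v2 ≠ 0 := by contrapose! hD; linarith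
  obtain ⟨a11, ha11⟩ : ∃ x : ℝ, x = (p1*w2 - q1*v2)/(2*(v1*w2 - v2*w1)) := ⟨_, rfl⟩
  obtain ⟨a12, ha12⟩ : ∃ x : ℝ, x = (q1*v1 - p1*w1)/(2*(v1*w2 - v2*w1)) := ⟨_, rfl⟩
  obtain ⟨a22, ha22⟩ : ∃ x : ℝ, x = (q2*v1 - p2*w1)/(2*(v1*w2 - v2*w1)) := ⟨_, rfl⟩
  obtain ⟨ev, hev⟩ : ∃ x : ℝ, x = cv - (a11*v1^2 + 2*a12*v1*v2 + a22*v2^2) := ⟨_, rfl⟩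
  obtain ⟨ew, hew⟩ : ∃ x : ℝ, x = cw - (a11*w1^2 + 2*a12*w1*w2 + a22*w2^2) := ⟨_, rfl⟩
  refine ⟨a11, a12, a22, (ev*w2 - ew*v2)/(v1*w2 - v2*w1), (ew*v1 - ev*w1)/(v1*w2 - v2*w1),
    ?_, ?_, ?_, ?_, ?_, ?_⟩
  · rw [ha11, ha12]; field_simp; ring
  · rw [ha12, ha22]; field_simp; linear_combination (-v1) * S
  · rw [ha11, ha12]; field_simp; ring
  · rw [ha12, ha22]; field_simp; linear_combination (-w1) * S
  · rw [← hev]; field_simp; ring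
  · rw [← hew]; field_simp; ring

theorem periodic_hessian_gives_quadratic_plus_periodic
    (v w : ℝ × ℝ) (hvw : LinearIndependent ℝ ![v, w])
    (h : ℝ × ℝ → ℝ) (hh : ContDiff ℝ (⊤ : ℕ∞) h)
    (hxx : LatticePeriodic v w (pdx (pdx h)))
    (hxy : LatticePeriodic v w (pdy (pdx h)))
    (hyy : LatticePeriodic v w (pdy (pdy h))) :
    ∃ a₁₁ a₁₂ a₂₂ b₁ b₂ b₀ : ℝ, ∃ lam : ℝ × ℝ → ℝ,
      ContDiff ℝ (⊤ : ℕ∞) lam ∧ LatticePeriodic v w lam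
        ∧ ∀ z : ℝ × ℝ, h z = lam z + a₁₁ * z.1 ^ 2 + 2 * a₁₂ * z.1 * z.2 + a₂₂ * z.2 ^ 2
            + b₁ * z.1 + b₂ * z.2 + b₀ := by
  have hdh : Differentiable ℝ h := hh.differentiable (by simp)
  have hφ1 : ContDiff ℝ (⊤ : ℕ∞) (fun z => fderiv ℝ h z (1,0)) :=
    (hh.fderiv_right (by simp)).clm_apply contDiff_const
  have hφ2 : ContDiff ℝ (⊤ : ℕ∞) (fun z => fderiv ℝ h z (0,1)) :=
    (hh.fderiv_right (by simp)).clm_apply contDiff_const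
  rw [pdx_eq h hdh] at hxx hxy
  rw [pdy_eq h hdh] at hyy
  rw [pdx_eq _ (hφ1.differentiable (by simp))] at hxx
  rw [pdy_eq _ (hφ1.differentiable (by simp))] at hxy
  rw [pdy_eq _ (hφ2.differentiable (by simp))] at hyy
  have h21 : LatticePeriodic v w (fun p => fderiv ℝ (fun z => fderiv ℝ h z (0,1)) p (1,0)) := by
    have : (fun p => fderiv ℝ (fun z => fderiv ℝ h z (0,1)) p (1,0))
        = (fun p => fderiv ℝ (fun z => fderiv ℝ h z (1,0)) p (0,1)) := by
      funext p; exact snd_deriv_swap h hh (0,1) (1,0) p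
    rw [this]; exact hxy
  have key : ∀ u : ℝ×ℝ, (∀ z, fderiv ℝ (fun p => fderiv ℝ h p (1,0)) (z+u) (1,0)
        = fderiv ℝ (fun p => fderiv ℝ h p (1,0)) z (1,0)) →
      (∀ z, fderiv ℝ (fun p => fderiv ℝ h p (1,0)) (z+u) (0,1)
        = fderiv ℝ (fun p => fderiv ℝ h p (1,0)) z (0,1)) →
      (∀ z, fderiv ℝ (fun p => fderiv ℝ h p (0,1)) (z+u) (1,0)
        = fderiv ℝ (fun p => fderiv ℝ h p (0,1)) z (1,0)) →
      (∀ z, fderiv ℝ (fun p => fderiv ℝ h p (0,1)) (z+u) (0,1)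
        = fderiv ℝ (fun p => fderiv ℝ h p (0,1)) z (0,1)) →
      ∀ z, h (z + u) = h z + (h u - h 0)
        + z.1 * (fderiv ℝ h u (1,0) - fderiv ℝ h 0 (1,0))
        + z.2 * (fderiv ℝ h u (0,1) - fderiv ℝ h 0 (0,1)) := by
    intro u p11 p12 p21 p22 z
    have hcg : ContDiff ℝ (⊤ : ℕ∞) (fun x : ℝ×ℝ => h (x + u) - h x) :=
      (hh.comp ((contDiff_id).add contDiff_const)).sub hh
    have hag := affine_of_snd_deriv_zero _ hcg
      (diff_snd_deriv_zero h hh u (1,0) (1,0) p11)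
      (diff_snd_deriv_zero h hh u (1,0) (0,1) p12)
      (diff_snd_deriv_zero h hh u (0,1) (1,0) p21)
      (diff_snd_deriv_zero h hh u (0,1) (0,1) p22) z
    have hshift : Differentiable ℝ (fun x : ℝ×ℝ => h (x + u)) :=
      hdh.comp (differentiable_id.add_const u)
    have hdg : ∀ e : ℝ×ℝ, fderiv ℝ (fun x : ℝ×ℝ => h (x + u) - h x) 0 e
        = fderiv ℝ h u e - fderiv ℝ h 0 e := by
      intro e
      rw [fderiv_fun_sub (hshift 0) (hdh 0), fderiv_shift h hdh u 0]
      simp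
    rw [hdg (1,0), hdg (0,1)] at hag
    simp only [zero_add] at hag
    linarith [hag]
  have Av := key v (fun z => (hxx z).1) (fun z => (hxy z).1) (fun z => (h21 z).1)
    (fun z => (hyy z).1)
  have Aw := key w (fun z => (hxx z).2) (fun z => (hxy z).2) (fun z => (h21 z).2)
    (fun z => (hyy z).2)
  obtain ⟨p1, p2, q1, q2, Av, Aw⟩ :
      ∃ p1 p2 q1 q2 : ℝ, (∀ z : ℝ×ℝ, h (z + v) = h z + (h v - h 0) + z.1 * p1 + z.2 * p2)
        ∧ (∀ z : ℝ×ℝ, h (z + w) = h z + (h w - h 0) + z.1 * q1 + z.2 * q2) :=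
    ⟨_, _, _, _, Av, Aw⟩
  have S : w.1 * p1 + w.2 * p2 = v.1 * q1 + v.2 * q2 := by
    have h1 := Av w
    have h2 := Aw v
    rw [add_comm w v] at h1
    linarith
  have hD : v.1 * w.2 - v.2 * w.1 ≠ 0 := by
    rw [LinearIndependent.pair_iff] at hvw
    intro hd
    have h1 := hvw w.1 (-v.1) (by ext <;> simp <;> linarith)
    have h2 := hvw w.2 (-v.2) (by ext <;> simp <;> linarith)
    have h3 := hvw 1 0 (by
      ext <;> simp <;> nlinarith [h1.1, h1.2, h2.1, h2.2])
    exact one_ne_zero h3.1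
  obtain ⟨a11, a12, a22, b1, b2, e1, e2, e3, e4, e5, e6⟩ :=
    solve_coeffs v.1 v.2 w.1 w.2 p1 p2 q1 q2 (h v - h 0) (h w - h 0) hD S
  refine ⟨a11, a12, a22, b1, b2, 0,
    fun z => h z - (a11 * z.1^2 + 2 * a12 * z.1 * z.2 + a22 * z.2^2 + b1 * z.1 + b2 * z.2),
    ?_, ?_, ?_⟩
  · apply hh.sub
    fun_prop
  · intro z
    constructor
    · show h (z+v) - (a11 * (z+v).1^2 + 2 * a12 * (z+v).1 * (z+v).2 + a22 * (z+v).2^2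
          + b1 * (z+v).1 + b2 * (z+v).2)
        = h z - (a11 * z.1^2 + 2 * a12 * z.1 * z.2 + a22 * z.2^2 + b1 * z.1 + b2 * z.2)
      simp only [Prod.fst_add, Prod.snd_add]
      linear_combination Av z - z.1 * e1 - z.2 * e2 - e5
    · show h (z+w) - (a11 * (z+w).1^2 + 2 * a12 * (z+w).1 * (z+w).2 + a22 * (z+w).2^2
          + b1 * (z+w).1 + b2 * (z+w).2)
        = h z - (a11 * z.1^2 + 2 * a12 * z.1 * z.2 + a22 * z.2^2 + b1 * z.1 + b2 * z.2)
      simp only [Prod.fst_add, Prod.snd_add]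
      linear_combination Aw z - z.1 * e3 - z.2 * e4 - e6
  · intro z; ring
end
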